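/- arXiv:1411.6719 — 7 statements merged into one kernel-verified Lean document; each statement's English description precedes it below -/
import Mathlib

section
/- Let (Ω, F) be a measurable space, let P and Q be probability measures on it with P absolutely continuous with respect to Q, and let Λ = dP/dQ denote the Radon–Nikodym derivative of P with respect to Q. Let m ⊆ F be a sub-σ-algebra and let X : Ω → ℝ be P-integrable. Then the Q-conditional expectation E_Q[Λ | m] is strictly positive P-almost everywhere, and E_P[X | m] = E_Q[X·Λ | m] / E_Q[Λ | m] holds P-almost everywhere. -/
open MeasureTheory

/-!
Write `Λ = dP/dQ`. Since `Λ` is a density of `P`, for `m`-measurable `s` we have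
`∫_s X Λ dQ = ∫_s X dP = ∫_s P[X|m] dP = ∫_s P[X|m] Λ dQ`, so `Q[XΛ|m] = Q[P[X|m] Λ|m]`, and
pulling out the `m`-measurable factor gives `Q[XΛ|m] = P[X|m] · Q[Λ|m]`. Dividing by `Q[Λ|m]`
is legitimate `P`-a.e. because `Q[Λ|m]` is the density of `P` with respect to `Q` on `m`,
which is positive almost everywhere for `P`.
-/

namespace MeasureTheory

variable {Ω : Type*} {m m0 : MeasurableSpace Ω} {P Q : Measure Ω}

section RadonNikodym

variable [P.HaveLebesgueDecomposition Q] [SigmaFinite P] {f : Ω → ℝ}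

lemma Integrable.mul_toReal_rnDeriv (hPQ : P ≪ Q) (hf : Integrable f P) :
    Integrable (fun ω ↦ f ω * (P.rnDeriv Q ω).toReal) Q := by
  simp_rw [mul_comm (f _)]
  exact (integrable_toReal_rnDeriv_mul_iff hPQ).2 hf

lemma setIntegral_mul_toReal_rnDeriv (hPQ : P ≪ Q) {s : Set Ω} (hs : MeasurableSet s) :
    ∫ ω in s, f ω * (P.rnDeriv Q ω).toReal ∂Q = ∫ ω in s, f ω ∂P := by
  simp_rw [mul_comm (f _)]
  exact setIntegral_toReal_rnDeriv_mul hPQ hs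

end RadonNikodym

lemma ae_pos_condExp_toReal_rnDeriv (hm : m ≤ m0) [IsFiniteMeasure P] [SigmaFinite (Q.trim hm)]
    (hPQ : P ≪ Q) : ∀ᵐ ω ∂P, 0 < Q[fun ω ↦ (P.rnDeriv Q ω).toReal | m] ω := by
  have hPQ_trim : P.trim hm ≪ Q.trim hm := hPQ.trim hm
  refine ae_of_ae_trim hm ?_
  filter_upwards [hPQ_trim.ae_le (toReal_rnDeriv_trim hm hPQ), Measure.rnDeriv_pos hPQ_trim,
    hPQ_trim.ae_le (Measure.rnDeriv_lt_top (P.trim hm) (Q.trim hm))] with ω h_eq h_pos h_lt_top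
  rw [← h_eq]
  exact ENNReal.toReal_pos h_pos.ne' h_lt_top.ne

lemma condExp_mul_toReal_rnDeriv_ae_eq_condExp_condExp_mul (hm : m ≤ m0) [IsFiniteMeasure P]
    [SigmaFinite (Q.trim hm)] (hPQ : P ≪ Q) {X : Ω → ℝ} (hX : Integrable X P) :
    Q[fun ω ↦ X ω * (P.rnDeriv Q ω).toReal | m]
      =ᵐ[Q] Q[fun ω ↦ (P[X | m]) ω * (P.rnDeriv Q ω).toReal | m] := by
  have := SigmaFinite.of_trim (μ := Q) hm
  refine ae_eq_condExp_of_forall_setIntegral_eq hm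
    (integrable_condExp.mul_toReal_rnDeriv hPQ) (fun s _ _ ↦ integrable_condExp.integrableOn)
    (fun s hs _ ↦ ?_) stronglyMeasurable_condExp.aestronglyMeasurable
  rw [setIntegral_condExp hm (hX.mul_toReal_rnDeriv hPQ) hs,
    setIntegral_mul_toReal_rnDeriv hPQ (hm s hs), setIntegral_mul_toReal_rnDeriv hPQ (hm s hs),
    setIntegral_condExp hm hX hs]

theorem condExp_mul_toReal_rnDeriv (hm : m ≤ m0) [IsFiniteMeasure P] [SigmaFinite (Q.trim hm)]
    (hPQ : P ≪ Q) {X : Ω → ℝ} (hX : Integrable X P) :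
    Q[fun ω ↦ X ω * (P.rnDeriv Q ω).toReal | m]
      =ᵐ[Q] P[X | m] * Q[fun ω ↦ (P.rnDeriv Q ω).toReal | m] := by
  have := SigmaFinite.of_trim (μ := Q) hm
  exact (condExp_mul_toReal_rnDeriv_ae_eq_condExp_condExp_mul hm hPQ hX).trans <|
    condExp_mul_of_stronglyMeasurable_left stronglyMeasurable_condExp
      (integrable_condExp.mul_toReal_rnDeriv hPQ) Measure.integrable_toReal_rnDeriv

end MeasureTheory

/-- **Abstract conditional Bayes formula (change of measure for conditional
expectations).** If `P ≪ Q` are probability measures with Radon–Nikodym derivative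
`Λ = dP/dQ`, `m` is a sub-σ-algebra and `X` is `P`-integrable, then `E_Q[Λ | m] > 0`
`P`-a.e. and `E_P[X | m] = E_Q[X·Λ | m] / E_Q[Λ | m]` `P`-a.e. -/
theorem stmt_0 {Ω : Type*} {F : MeasurableSpace Ω} (P Q : Measure Ω)
    [IsProbabilityMeasure P] [IsProbabilityMeasure Q] (hPQ : P ≪ Q)
    (m : MeasurableSpace Ω) (hm : m ≤ F) (X : Ω → ℝ) (hX : Integrable X P) :
    (∀ᵐ ω ∂P, 0 < (Q[fun ω' => (P.rnDeriv Q ω').toReal | m]) ω) ∧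
      (P[X | m]) =ᵐ[P]
        fun ω =>
          (Q[fun ω' => X ω' * (P.rnDeriv Q ω').toReal | m]) ω /
            (Q[fun ω' => (P.rnDeriv Q ω').toReal | m]) ω := by
  have hpos := ae_pos_condExp_toReal_rnDeriv hm hPQ
  refine ⟨hpos, ?_⟩
  filter_upwards [hPQ.ae_le (condExp_mul_toReal_rnDeriv hm hPQ hX), hpos] with ω h_eq h_pos
  rw [h_eq, Pi.mul_apply, mul_div_cancel_right₀ _ h_pos.ne']
end

section
/- Let N ≥ 1 and let A be a real symmetric positive semidefinite N×N matrix all of whose eigenvalues are at least 1 (equivalently, A − I is positive semidefinite). Then the adjugate matrix of A satisfies ‖adj(A)‖_F ≤ √N · det(A). -/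
/-!
Diagonalise `A = U Λ Uᴴ` with `U` unitary. Adjugation is multiplicative and sends a unitary `U`
to `det U • Uᴴ`, so `adj A = U adj(Λ) Uᴴ`, where `adj Λ` is diagonal with entries `∏_{j ≠ i} λ_j`.
Over `ℝ` the sum of squared entries is invariant under orthogonal conjugation, hence
`‖adj A‖_F² = ∑ᵢ (∏_{j ≠ i} λ_j)²`, and since every `λ_j ≥ 1` each term is at most
`(∏_j λ_j)² = (det A)²`.
-/

/-- The Frobenius norm of a real `N × N` matrix: `‖A‖_F = sqrt (∑ i j, A i j ^ 2)`. -/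
noncomputable def frobNorm {N : ℕ} (A : Matrix (Fin N) (Fin N) ℝ) : ℝ :=
  Real.sqrt (∑ i, ∑ j, A i j ^ 2)

open Finset
open scoped ComplexOrder

namespace Matrix

variable {m n : Type*} [Fintype m] [Fintype n]

theorem sum_sq_entries_eq_trace {R : Type*} [CommSemiring R] (M : Matrix m n R) :
    ∑ i, ∑ j, M i j ^ 2 = trace (Mᵀ * M) := by
  simp only [trace, diag, mul_apply, transpose_apply, sq]
  exact sum_comm

variable [DecidableEq n]

theorem adjugate_eq_det_smul_star_of_mem_unitary {R : Type*} [CommRing R] [StarRing R]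
    {U : Matrix n n R} (hU : U ∈ unitary (Matrix n n R)) : adjugate U = U.det • star U :=
  calc adjugate U = star U * (U * adjugate U) := by
        rw [← mul_assoc, Unitary.star_mul_self_of_mem hU, one_mul]
    _ = U.det • star U := by rw [mul_adjugate, Matrix.mul_smul, mul_one]

theorem adjugate_unitary_conj {R : Type*} [CommRing R] [StarRing R] {U : Matrix n n R}
    (hU : U ∈ unitary (Matrix n n R)) (D : Matrix n n R) :
    adjugate (U * D * star U) = U * adjugate D * star U := by
  rw [adjugate_mul_distrib, adjugate_mul_distrib, adjugate_eq_det_smul_star_of_mem_unitary hU,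
    adjugate_eq_det_smul_star_of_mem_unitary (Unitary.star_mem hU), star_star]
  simp only [Matrix.smul_mul, Matrix.mul_smul, smul_smul, ← det_mul,
    Unitary.mul_star_self_of_mem hU, det_one, one_smul, mul_assoc]

theorem sum_sq_entries_unitary_conj {R : Type*} [CommRing R] [StarRing R] [TrivialStar R]
    {U : Matrix n n R} (hU : U ∈ unitary (Matrix n n R)) (M : Matrix n n R) :
    ∑ i, ∑ j, (U * M * star U) i j ^ 2 = ∑ i, ∑ j, M i j ^ 2 := by
  have hUt : star U = Uᵀ := by rw [star_eq_conjTranspose, conjTranspose_eq_transpose_of_trivial]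
  rw [sum_sq_entries_eq_trace, sum_sq_entries_eq_trace, hUt, transpose_mul, transpose_mul,
    transpose_transpose, ← hUt]
  calc trace (U * (Mᵀ * star U) * (U * M * star U))
      = trace (U * (Mᵀ * (star U * U) * M) * star U) := by simp only [mul_assoc]
    _ = trace (Mᵀ * M) := by
      rw [Unitary.star_mul_self_of_mem hU, mul_one, trace_mul_cycle,
        Unitary.star_mul_self_of_mem hU, one_mul]

theorem sum_sq_entries_diagonal {R : Type*} [CommSemiring R] (d : n → R) :
    ∑ i, ∑ j, diagonal d i j ^ 2 = ∑ i, d i ^ 2 := by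
  simp [diagonal_apply]

theorem IsHermitian.one_le_eigenvalues {𝕜 : Type*} [RCLike 𝕜] {A : Matrix n n 𝕜}
    (hA : A.IsHermitian) (h1 : (A - 1).PosSemidef) (i : n) : 1 ≤ hA.eigenvalues i := by
  have hv := h1.dotProduct_mulVec_nonneg (hA.eigenvectorBasis i)
  have hunit : star ⇑(hA.eigenvectorBasis i) ⬝ᵥ ⇑(hA.eigenvectorBasis i) = 1 := by
    rw [dotProduct_comm, ← EuclideanSpace.inner_eq_star_dotProduct, inner_self_eq_norm_sq_to_K,
      hA.eigenvectorBasis.orthonormal.1 i]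
    simp
  rw [sub_mulVec, one_mulVec, dotProduct_sub, hunit, sub_nonneg] at hv
  rw [hA.eigenvalues_eq]
  simpa using (RCLike.le_iff_re_im.mp hv).1

theorem IsHermitian.spectral_theorem_adjugate {𝕜 : Type*} [RCLike 𝕜] {A : Matrix n n 𝕜}
    (hA : A.IsHermitian) :
    A.adjugate = (hA.eigenvectorUnitary : Matrix n n 𝕜) *
      diagonal (fun i => ∏ j ∈ univ.erase i, (hA.eigenvalues j : 𝕜)) *
      star (hA.eigenvectorUnitary : Matrix n n 𝕜) := by
  conv_lhs => rw [hA.spectral_theorem, Unitary.conjStarAlgAut_apply]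
  rw [adjugate_unitary_conj hA.eigenvectorUnitary.2, adjugate_diagonal]
  rfl

end Matrix

open Matrix

theorem stmt_8_general {N : ℕ} (A : Matrix (Fin N) (Fin N) ℝ)
    (hA : A.PosSemidef) (hA1 : (A - 1).PosSemidef) :
    frobNorm A.adjugate ≤ Real.sqrt N * A.det := by
  set ev := hA.1.eigenvalues
  have hev : ∀ i, 1 ≤ ev i := hA.1.one_le_eigenvalues hA1
  have hev0 : ∀ i, 0 ≤ ev i := fun i => zero_le_one.trans (hev i)
  have hdet : A.det = ∏ j, ev j := by simpa using hA.1.det_eq_prod_eigenvalues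
  have hcof : ∀ i, ∏ j ∈ univ.erase i, ev j ≤ A.det := fun i => hdet ▸
    prod_le_prod_of_subset_of_one_le (erase_subset _ _) (fun j _ => hev0 j) (fun j _ _ => hev j)
  have hsq : ∑ i, ∑ j, A.adjugate i j ^ 2 = ∑ i, (∏ j ∈ univ.erase i, ev j) ^ 2 := by
    rw [hA.1.spectral_theorem_adjugate, sum_sq_entries_unitary_conj hA.1.eigenvectorUnitary.2,
      sum_sq_entries_diagonal]
    simp [ev]
  calc frobNorm A.adjugate = √(∑ i, (∏ j ∈ univ.erase i, ev j) ^ 2) := by rw [frobNorm, hsq]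
    _ ≤ √(∑ _i : Fin N, A.det ^ 2) := by
      gcongr with i
      · exact prod_nonneg fun j _ => hev0 j
      · exact hcof i
    _ = √N * A.det := by
      rw [sum_const, card_univ, Fintype.card_fin, nsmul_eq_mul, Real.sqrt_mul (Nat.cast_nonneg _),
        Real.sqrt_sq (hdet ▸ prod_nonneg fun j _ => hev0 j)]

/-- If `A` is a real symmetric positive semidefinite `N × N` matrix all of whose
eigenvalues are at least `1` (equivalently, `A − I` is positive semidefinite), then
`‖adj(A)‖_F ≤ √N · det A`. -/
theorem stmt_8 {N : ℕ} (hN : 1 ≤ N) (A : Matrix (Fin N) (Fin N) ℝ)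
    (hA : A.PosSemidef) (hA1 : (A - 1).PosSemidef) :
    frobNorm A.adjugate ≤ Real.sqrt N * A.det :=
  stmt_8_general A hA hA1
end

section
/- Let (Ω, F, P) be a probability space, let N ≥ 1 be a natural number, let t ∈ ℕ, and let C ≥ 1 be a real constant. Let Q_0, …, Q_t : Ω → ℝ be random variables (not necessarily independent) each of whose law is the chi-squared distribution with N degrees of freedom, i.e. the Gamma distribution with shape N/2 and rate 1/2. Then P( sup_{i ∈ {0,…,t}} Q_i < 5·C·N·(1 + log(t+1)) ) ≥ 1 − exp(−C·N) / (t+1)^{C·N − 1}. -/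
/-!
A Chernoff bound with parameter `3/8` gives `P(Q ≥ B) ≤ 4^{N/2} e^{-3B/8}` for a chi-squared
variable `Q` with `N` degrees of freedom, since its moment generating function at `3/8` is
`(1 - 2·3/8)^{-N/2} = 4^{N/2}`. A union bound over the `t + 1` variables costs a factor `t + 1`,
and for `B = 5CN(1 + log(t+1))` the resulting bound is at most `e^{-CN} (t+1)^{1-CN}`
because `log 2 < 7/8 ≤ 7C/8`.
-/

open MeasureTheory ProbabilityTheory Real Set
open scoped ENNReal

section GammaTail

lemma measurable_gammaPDF (a r : ℝ) : Measurable (gammaPDF a r) :=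
  (measurable_gammaPDFReal a r).ennreal_ofReal

variable {a r s : ℝ}

lemma gammaPDF_mul_exp (hr : 0 ≤ r) (hs : s < r) (x : ℝ) :
    gammaPDF a r x * ENNReal.ofReal (exp (s * x)) =
      ENNReal.ofReal ((r / (r - s)) ^ a) * gammaPDF a (r - s) x := by
  rcases lt_or_ge x 0 with hx | hx
  · simp [gammaPDF_of_neg hx]
  rw [gammaPDF_of_nonneg hx, gammaPDF_of_nonneg hx, ← ENNReal.ofReal_mul' (exp_nonneg _),
    ← ENNReal.ofReal_mul (by positivity)]
  congr 1
  have hrs : (r / (r - s)) ^ a * (r - s) ^ a = r ^ a := by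
    rw [← mul_rpow (div_nonneg hr (sub_pos.2 hs).le) (sub_pos.2 hs).le,
      div_mul_cancel₀ _ (sub_pos.2 hs).ne']
  have hexp : exp (-(r * x)) * exp (s * x) = exp (-((r - s) * x)) := by
    rw [← exp_add]; ring_nf
  rw [← hrs, mul_assoc _ (exp _), hexp]
  ring

lemma lintegral_exp_mul_gammaMeasure (ha : 0 < a) (hr : 0 ≤ r) (hs : s < r) :
    ∫⁻ x, ENNReal.ofReal (exp (s * x)) ∂gammaMeasure a r =
      ENNReal.ofReal ((r / (r - s)) ^ a) := by
  rw [gammaMeasure, lintegral_withDensity_eq_lintegral_mul _ (measurable_gammaPDF a r)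
    (by fun_prop)]
  simp_rw [Pi.mul_apply, gammaPDF_mul_exp hr hs]
  rw [lintegral_const_mul _ (measurable_gammaPDF a (r - s)),
    lintegral_gammaPDF_eq_one ha (sub_pos.2 hs), mul_one]

lemma measure_Ici_le_exp_mul_lintegral_exp (μ : Measure ℝ) (hs : 0 ≤ s) (B : ℝ) :
    μ (Ici B) ≤ ENNReal.ofReal (exp (-(s * B))) * ∫⁻ x, ENNReal.ofReal (exp (s * x)) ∂μ := by
  have markov := mul_meas_ge_le_lintegral₀
    (f := fun x ↦ ENNReal.ofReal (exp (s * x))) (μ := μ) (by fun_prop)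
    (ENNReal.ofReal (exp (s * B)))
  have hsub : Ici B ⊆ {x | ENNReal.ofReal (exp (s * B)) ≤ ENNReal.ofReal (exp (s * x))} :=
    fun x hx ↦ ENNReal.ofReal_le_ofReal (exp_le_exp.2 (mul_le_mul_of_nonneg_left hx hs))
  calc μ (Ici B)
      = ENNReal.ofReal (exp (-(s * B))) * (ENNReal.ofReal (exp (s * B)) * μ (Ici B)) := by
        rw [← mul_assoc, ← ENNReal.ofReal_mul (exp_nonneg _), ← exp_add, neg_add_cancel,
          exp_zero, ENNReal.ofReal_one, one_mul]
    _ ≤ _ := by gcongr; exact (by gcongr : _ ≤ _ * μ _).trans markov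

lemma gammaMeasure_Ici_le (ha : 0 < a) (hs₀ : 0 ≤ s) (hs : s < r) (B : ℝ) :
    gammaMeasure a r (Ici B) ≤ ENNReal.ofReal ((r / (r - s)) ^ a * exp (-(s * B))) := by
  refine (measure_Ici_le_exp_mul_lintegral_exp _ hs₀ B).trans_eq ?_
  rw [lintegral_exp_mul_gammaMeasure ha (hs₀.trans hs.le) hs, ← ENNReal.ofReal_mul (exp_nonneg _),
    mul_comm]

lemma measure_le_le_of_map_eq_gammaMeasure {Ω : Type*} [MeasurableSpace Ω] {P : Measure Ω}
    {X : Ω → ℝ} (hX : P.map X = gammaMeasure a r) (ha : 0 < a) (hs₀ : 0 ≤ s) (hs : s < r)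
    (B : ℝ) :
    P {ω | B ≤ X ω} ≤ ENNReal.ofReal ((r / (r - s)) ^ a * exp (-(s * B))) := by
  have : IsProbabilityMeasure (P.map X) :=
    hX ▸ isProbabilityMeasure_gammaMeasure ha (hs₀.trans_lt hs)
  refine le_of_eq_of_le ?_ (hX ▸ gammaMeasure_Ici_le ha hs₀ hs B)
  rw [Measure.map_apply_of_aemeasurable (aemeasurable_of_map_neZero inferInstance)
    measurableSet_Ici]
  rfl

end GammaTail

lemma one_sub_card_mul_le_measure_forall_lt {Ω ι : Type*} [MeasurableSpace Ω] [Fintype ι]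
    (P : Measure Ω) [IsProbabilityMeasure P] (X : ι → Ω → ℝ) (B : ℝ) {δ : ℝ≥0∞}
    (hX : ∀ i, P {ω | B ≤ X i ω} ≤ δ) :
    1 - Fintype.card ι * δ ≤ P {ω | ∀ i, X i ω < B} := by
  set A := {ω | ∀ i, X i ω < B}
  have hAc : P Aᶜ ≤ Fintype.card ι * δ := calc
    P Aᶜ = P (⋃ i, {ω | B ≤ X i ω}) := by congr 1; ext ω; simp [A]
    _ ≤ ∑ i, P {ω | B ≤ X i ω} := measure_iUnion_fintype_le _ _
    _ ≤ ∑ _i : ι, δ := Finset.sum_le_sum fun i _ ↦ hX i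
    _ = Fintype.card ι * δ := by simp
  have hcover : 1 ≤ P A + P Aᶜ := by
    rw [← measure_univ (μ := P), ← union_compl_self A]
    exact measure_union_le _ _
  exact (tsub_le_tsub_left hAc 1).trans (tsub_le_iff_right.2 hcover)

lemma mul_four_rpow_mul_exp_le {T n C : ℝ} (hT : 1 ≤ T) (hn : 0 ≤ n) (hC : 1 ≤ C) :
    T * (4 ^ (n / 2) * exp (-(3 / 8 * (5 * C * n * (1 + log T))))) ≤
      exp (-(C * n)) / T ^ (C * n - 1) := by
  have hT₀ : 0 < T := zero_lt_one.trans_le hT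
  have hL : 0 ≤ log T := log_nonneg hT
  have hlog4 : log 4 = 2 * log 2 := by
    rw [show (4 : ℝ) = 2 ^ 2 by norm_num, log_pow]; push_cast; ring
  rw [rpow_def_of_pos (by norm_num), rpow_def_of_pos hT₀, hlog4, ← exp_log hT₀, ← exp_add,
    ← exp_add, ← exp_sub, exp_le_exp, log_exp]
  nlinarith [log_two_lt_d9, mul_nonneg (mul_nonneg (zero_le_one.trans hC) hn) hL,
    mul_le_mul_of_nonneg_right (mul_le_mul_of_nonneg_right hC hn) hL]

/-- **Core estimate of Lemma 8.** If `Q_0, …, Q_t` are (not necessarily independent)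
random variables each distributed as chi-squared with `N` degrees of freedom (the Gamma
distribution with shape `N/2` and rate `1/2`), then for any `C ≥ 1`,
`P(sup_i Q_i < 5·C·N·(1 + log(t+1))) ≥ 1 − exp(−C·N)/(t+1)^{C·N − 1}`. -/
theorem stmt_9 {Ω : Type*} [MeasurableSpace Ω] (P : Measure Ω) [IsProbabilityMeasure P]
    (N : ℕ) (hN : 1 ≤ N) (t : ℕ) (C : ℝ) (hC : 1 ≤ C)
    (Q : Fin (t + 1) → Ω → ℝ)
    (hQ : ∀ i, P.map (Q i) = gammaMeasure ((N : ℝ) / 2) (1 / 2)) :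
    ENNReal.ofReal (1 - Real.exp (-(C * N)) / (t + 1 : ℝ) ^ (C * N - 1)) ≤
      P {ω | ∀ i, Q i ω < 5 * C * N * (1 + Real.log (t + 1))} := by
  set B := 5 * C * N * (1 + Real.log (t + 1))
  have htail : ∀ i, P {ω | B ≤ Q i ω} ≤ ENNReal.ofReal (4 ^ ((N : ℝ) / 2) * exp (-(3 / 8 * B))) :=
    fun i ↦ by
      convert measure_le_le_of_map_eq_gammaMeasure (hQ i) (by positivity) (s := 3 / 8)
        (by norm_num) (by norm_num) B using 4
      norm_num
  refine le_trans ?_ (one_sub_card_mul_le_measure_forall_lt P Q B htail)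
  rw [ENNReal.ofReal_sub _ (by positivity), ENNReal.ofReal_one, Fintype.card_fin]
  gcongr
  rw [← ENNReal.ofReal_natCast, ← ENNReal.ofReal_mul (by positivity)]
  push_cast
  exact ENNReal.ofReal_le_ofReal (mul_four_rpow_mul_exp_le (by simp) (Nat.cast_nonneg N) hC)
end

section
/- Let (Ω, F, P) be a probability space, let −∞ < a < b < ∞, and let X : Ω → ℝ and X^n : Ω → ℝ (n ∈ ℕ) be measurable random variables all taking values in [a, b] almost surely. Suppose that for P-almost every ω ∈ Ω, the regular conditional distribution of X^n given X, evaluated at X(ω), converges weakly (as probability measures on ℝ) to the Dirac measure at X(ω), as n → ∞. Then E[|X − X^n|] → 0 as n → ∞, i.e. X^n converges to X in L¹(P). -/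
open MeasureTheory ProbabilityTheory Filter BoundedContinuousFunction
open scoped Topology

/-!
Disintegrating the law of `(X, Xⁿ)` along `X` writes `E|X - Xⁿ|` as the `P`-integral of
`ω ↦ ∫ |X ω - y| d(condDistrib (Xⁿ) X P (X ω))`. On the support of these conditional laws,
which lies in `[a, b]`, the integrand agrees with the bounded continuous function
`y ↦ min |X ω - y| (b - a)`, so C-weak convergence sends the inner integrals to `0` for a.e. `ω`;
they are bounded by `b - a`, and dominated convergence concludes.
-/

namespace ProbabilityTheory

section CondDistrib

variable {α β Ω : Type*} {mα : MeasurableSpace α} [MeasurableSpace β] [MeasurableSpace Ω]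
  [StandardBorelSpace Ω] [Nonempty Ω] {μ : Measure α} [IsFiniteMeasure μ]
  {X : α → β} {Y : α → Ω}

lemma ae_ae_condDistrib_of_ae {p : β × Ω → Prop} (hX : AEMeasurable X μ) (hY : AEMeasurable Y μ)
    (hp : MeasurableSet {q | p q}) (h : ∀ᵐ a ∂μ, p (X a, Y a)) :
    ∀ᵐ a ∂μ, ∀ᵐ y ∂condDistrib Y X μ (X a), p (X a, y) := by
  have h_compProd : ∀ᵐ q ∂(μ.map X ⊗ₘ condDistrib Y X μ), p q := by
    rwa [compProd_map_condDistrib hY, ae_map_iff (hX.prodMk hY) hp]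
  exact ae_of_ae_map hX (Measure.ae_ae_of_ae_compProd h_compProd)

lemma integral_eq_integral_integral_condDistrib {F : Type*} [NormedAddCommGroup F]
    [NormedSpace ℝ F] {f : β × Ω → F} (hX : AEMeasurable X μ) (hY : AEMeasurable Y μ)
    (hf : Integrable f (μ.map fun a ↦ (X a, Y a))) :
    ∫ a, f (X a, Y a) ∂μ = ∫ a, ∫ y, f (X a, y) ∂condDistrib Y X μ (X a) ∂μ := by
  rw [← integral_map (hX.prodMk hY) hf.1, ← integral_map hX (hf.1.integral_condDistrib_map hY),
    ← Measure.integral_compProd (by rwa [compProd_map_condDistrib hY]),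
    compProd_map_condDistrib hY]

end CondDistrib

lemma tendsto_integral_dist_of_tendsto_integral_boundedContinuous {γ ι : Type*}
    [PseudoMetricSpace γ] [MeasurableSpace γ] {l : Filter ι} {ν : ι → Measure γ} {x : γ} {C : ℝ}
    (hν : ∀ f : γ →ᵇ ℝ, Tendsto (fun i ↦ ∫ y, f y ∂ν i) l (𝓝 (f x)))
    (hC : ∀ᶠ i in l, ∀ᵐ y ∂ν i, dist x y ≤ C) :
    Tendsto (fun i ↦ ∫ y, dist x y ∂ν i) l (𝓝 0) := by
  let truncDist : γ →ᵇ ℝ := ofNormedAddCommGroup (fun y ↦ min (dist x y) (max C 0))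
    ((continuous_const.dist continuous_id).min continuous_const) (max C 0) fun y ↦ by
      rw [Real.norm_of_nonneg (le_min dist_nonneg (le_max_right C 0))]
      exact min_le_right _ _
  have h_eq : ∀ᶠ i in l, ∫ y, truncDist y ∂ν i = ∫ y, dist x y ∂ν i := by
    filter_upwards [hC] with i hi
    refine integral_congr_ae ?_
    filter_upwards [hi] with y hy
    exact min_eq_left (hy.trans (le_max_left C 0))
  have h_lim := hν truncDist
  rwa [show truncDist x = 0 by simp [truncDist], tendsto_congr' h_eq] at h_lim

theorem tendsto_integral_dist_of_ae_tendsto_condDistrib {Ω E : Type*} [MeasurableSpace Ω]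
    {P : Measure Ω} [IsFiniteMeasure P] [PseudoMetricSpace E] [MeasurableSpace E]
    [OpensMeasurableSpace E] [SecondCountableTopology E] [StandardBorelSpace E] [Nonempty E]
    {X : Ω → E} {Xn : ℕ → Ω → E} (hX : AEMeasurable X P) (hXn : ∀ n, AEMeasurable (Xn n) P)
    {C : ℝ} (hC : ∀ n, ∀ᵐ ω ∂P, dist (X ω) (Xn n ω) ≤ C)
    (hweak : ∀ᵐ ω ∂P, ∀ f : E →ᵇ ℝ,
      Tendsto (fun n ↦ ∫ y, f y ∂condDistrib (Xn n) X P (X ω)) atTop (𝓝 (f (X ω)))) :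
    Tendsto (fun n ↦ ∫ ω, dist (X ω) (Xn n ω) ∂P) atTop (𝓝 0) := by
  have h_dist_meas : Measurable fun q : E × E ↦ dist q.1 q.2 := measurable_fst.dist measurable_snd
  have h_le_meas : MeasurableSet {q : E × E | dist q.1 q.2 ≤ C} :=
    measurableSet_le h_dist_meas measurable_const
  have h_cond_le : ∀ n, ∀ᵐ ω ∂P, ∀ᵐ y ∂condDistrib (Xn n) X P (X ω), dist (X ω) y ≤ C :=
    fun n ↦ ae_ae_condDistrib_of_ae hX (hXn n) h_le_meas (hC n)
  have h_disintegrate : ∀ n, ∫ ω, dist (X ω) (Xn n ω) ∂P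
      = ∫ ω, ∫ y, dist (X ω) y ∂condDistrib (Xn n) X P (X ω) ∂P := by
    intro n
    refine integral_eq_integral_integral_condDistrib (f := fun q ↦ dist q.1 q.2) hX (hXn n) ?_
    refine .of_bound h_dist_meas.aestronglyMeasurable C ?_
    filter_upwards [(ae_map_iff (hX.prodMk (hXn n)) h_le_meas).2 (hC n)] with q hq
    rwa [Real.norm_of_nonneg dist_nonneg]
  simp_rw [h_disintegrate]
  rw [← integral_zero Ω ℝ (μ := P)]
  refine tendsto_integral_of_dominated_convergence (fun _ ↦ C)
    (fun n ↦ h_dist_meas.aestronglyMeasurable.integral_condDistrib hX (hXn n))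
    (integrable_const C) (fun n ↦ ?_) ?_
  · filter_upwards [h_cond_le n] with ω hω
    have h_norm : ∀ᵐ y ∂condDistrib (Xn n) X P (X ω), ‖dist (X ω) y‖ ≤ C :=
      hω.mono fun y hy ↦ by rwa [Real.norm_of_nonneg dist_nonneg]
    simpa using norm_integral_le_of_norm_le_const h_norm
  · filter_upwards [hweak, ae_all_iff.2 h_cond_le] with ω hω h_le
    exact tendsto_integral_dist_of_tendsto_integral_boundedContinuous hω (.of_forall h_le)

end ProbabilityTheory

theorem stmt_10_general {Ω : Type*} [MeasurableSpace Ω] (P : Measure Ω) [IsProbabilityMeasure P]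
    (a b : ℝ)
    (X : Ω → ℝ) (Xn : ℕ → Ω → ℝ) (hX : Measurable X) (hXn : ∀ n, Measurable (Xn n))
    (hXab : ∀ᵐ ω ∂P, X ω ∈ Set.Icc a b) (hXnab : ∀ n, ∀ᵐ ω ∂P, Xn n ω ∈ Set.Icc a b)
    (hweak : ∀ᵐ ω ∂P, ∀ f : BoundedContinuousFunction ℝ ℝ,
      Tendsto (fun n => ∫ x, f x ∂(condDistrib (Xn n) X P (X ω))) atTop (nhds (f (X ω)))) :
    Tendsto (fun n => ∫ ω, |X ω - Xn n ω| ∂P) atTop (nhds 0) := by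
  simp_rw [← Real.dist_eq]
  refine tendsto_integral_dist_of_ae_tendsto_condDistrib hX.aemeasurable
    (fun n ↦ (hXn n).aemeasurable) (C := b - a) (fun n ↦ ?_) hweak
  filter_upwards [hXab, hXnab n] with ω hXω hXnω using Real.dist_le_of_mem_Icc hXω hXnω

/-- **Lemma 9 (From C-weak convergence to convergence in L¹).** If `X` and the `X^n` all
take values in `[a, b]` a.s. and, for a.e. `ω`, the regular conditional distribution of
`X^n` given `X`, evaluated at `X(ω)`, converges weakly to the Dirac measure at `X(ω)`,
then `E[|X − X^n|] → 0`. -/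
theorem stmt_10 {Ω : Type*} [MeasurableSpace Ω] (P : Measure Ω) [IsProbabilityMeasure P]
    (a b : ℝ) (hab : a < b)
    (X : Ω → ℝ) (Xn : ℕ → Ω → ℝ) (hX : Measurable X) (hXn : ∀ n, Measurable (Xn n))
    (hXab : ∀ᵐ ω ∂P, X ω ∈ Set.Icc a b) (hXnab : ∀ n, ∀ᵐ ω ∂P, Xn n ω ∈ Set.Icc a b)
    (hweak : ∀ᵐ ω ∂P, ∀ f : BoundedContinuousFunction ℝ ℝ,
      Tendsto (fun n => ∫ x, f x ∂(condDistrib (Xn n) X P (X ω))) atTop (nhds (f (X ω)))) :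
    Tendsto (fun n => ∫ ω, |X ω - Xn n ω| ∂P) atTop (nhds 0) :=
  stmt_10_general P a b X Xn hX hXn hXab hXnab hweak
end

section
/- Fix N ≥ 1, a set Z ⊆ ℝ, constants K_μ ≥ 0, μ_sup ≥ 0, K_INV ≥ 0, and λ ≥ 1. Let y ∈ ℝ^N, let μ : Z → ℝ^N satisfy ‖μ(x) − μ(x')‖ ≤ K_μ|x − x'| and ‖μ(x)‖ ≤ μ_sup for all x, x' ∈ Z, and let C : Z → Matrix (Fin N) (Fin N) ℝ take invertible values with spectral norm ‖C(x)^{-1}‖₂ ≤ 1/λ and ‖C(x)^{-1} − C(x')^{-1}‖₂ ≤ K_INV|x − x'| for all x, x' ∈ Z. Define q(x) := ⟨y − μ(x), C(x)^{-1}(y − μ(x))⟩. Then for all x, x' ∈ Z: |q(x) − q(x')| ≤ [ 2·K_μ·(‖y‖ + μ_sup)/λ + K_INV·(‖y‖ + μ_sup)² ] · |x − x'|. -/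
open Matrix

/-- The Euclidean norm on `ℝ^N`. -/
noncomputable def enorm {N : ℕ} (v : Fin N → ℝ) : ℝ :=
  Real.sqrt (∑ j, v j ^ 2)

/-- The spectral (operator) norm of a real `N × N` matrix: the supremum of the Euclidean
norms `‖M v‖` over vectors `v` in the Euclidean unit ball. -/
noncomputable def specNorm {N : ℕ} (M : Matrix (Fin N) (Fin N) ℝ) : ℝ :=
  ⨆ v : { v : Fin N → ℝ // _root_.enorm v ≤ 1 }, _root_.enorm (M.mulVec v)

/-!
Write `u = y - μ(x)`, `u' = y - μ(x')`, `A = C(x)⁻¹`, `A' = C(x')⁻¹`. Then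
`⟨u, A u⟩ - ⟨u', A' u'⟩ = ⟨u - u', A u⟩ + ⟨u', A (u - u')⟩ + ⟨u', (A - A') u'⟩`, and Cauchy–Schwarz
bounds the three terms by `‖u - u'‖ ‖A‖ ‖u‖`, `‖u'‖ ‖A‖ ‖u - u'‖` and `‖u'‖² ‖A - A'‖`, where
`‖u‖, ‖u'‖ ≤ ‖y‖ + μ_sup`. To use Mathlib's inner product space theory, `enorm` and `specNorm` are
identified with the norm of `EuclideanSpace ℝ (Fin N)` and the operator norm of
`Matrix.toEuclideanCLM`.
-/

open scoped RealInnerProductSpace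

section InnerProductSpace

variable {E : Type*} [NormedAddCommGroup E] [InnerProductSpace ℝ E]

theorem inner_apply_sub_inner_apply (T T' : E →L[ℝ] E) (u u' : E) :
    ⟪u, T u⟫ - ⟪u', T' u'⟫ = ⟪u - u', T u⟫ + ⟪u', T (u - u')⟫ + ⟪u', (T - T') u'⟫ := by
  simp only [map_sub, _root_.sub_apply, inner_sub_left, inner_sub_right]
  ring

theorem abs_inner_apply_le (T : E →L[ℝ] E) (u v : E) : |⟪u, T v⟫| ≤ ‖u‖ * ‖T‖ * ‖v‖ :=
  calc |⟪u, T v⟫| ≤ ‖u‖ * ‖T v‖ := abs_real_inner_le_norm _ _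
    _ ≤ ‖u‖ * (‖T‖ * ‖v‖) := by gcongr; exact T.le_opNorm v
    _ = ‖u‖ * ‖T‖ * ‖v‖ := (mul_assoc _ _ _).symm

theorem abs_inner_apply_sub_inner_apply_le (T T' : E →L[ℝ] E) (u u' : E) :
    |⟪u, T u⟫ - ⟪u', T' u'⟫| ≤
      ‖u - u'‖ * ‖T‖ * ‖u‖ + ‖u'‖ * ‖T‖ * ‖u - u'‖ + ‖u'‖ * ‖T - T'‖ * ‖u'‖ := by
  rw [inner_apply_sub_inner_apply]
  refine (abs_add_three _ _ _).trans ?_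
  gcongr <;> exact abs_inner_apply_le _ _ _

theorem abs_inner_apply_sub_inner_apply_le_of_le {T T' : E →L[ℝ] E} {u u' : E} {R δ a κ : ℝ}
    (hu : ‖u‖ ≤ R) (hu' : ‖u'‖ ≤ R) (hδ : ‖u - u'‖ ≤ δ) (ha : ‖T‖ ≤ a) (hκ : ‖T - T'‖ ≤ κ) :
    |⟪u, T u⟫ - ⟪u', T' u'⟫| ≤ 2 * a * δ * R + κ * R ^ 2 := by
  have hδ₀ : 0 ≤ δ := (norm_nonneg _).trans hδ
  have ha₀ : 0 ≤ a := (norm_nonneg _).trans ha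
  have hR₀ : 0 ≤ R := (norm_nonneg _).trans hu
  have hκ₀ : 0 ≤ κ := (norm_nonneg _).trans hκ
  calc |⟪u, T u⟫ - ⟪u', T' u'⟫|
      ≤ ‖u - u'‖ * ‖T‖ * ‖u‖ + ‖u'‖ * ‖T‖ * ‖u - u'‖ + ‖u'‖ * ‖T - T'‖ * ‖u'‖ :=
        abs_inner_apply_sub_inner_apply_le T T' u u'
    _ ≤ δ * a * R + R * a * δ + R * κ * R := by gcongr
    _ = 2 * a * δ * R + κ * R ^ 2 := by ring

end InnerProductSpace

section EuclideanNorms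

variable {N : ℕ}

theorem enorm_eq_norm_toLp (v : Fin N → ℝ) : _root_.enorm v = ‖WithLp.toLp 2 v‖ := by
  simp [_root_.enorm, EuclideanSpace.norm_eq]

theorem specNorm_eq_norm_toEuclideanCLM (M : Matrix (Fin N) (Fin N) ℝ) :
    specNorm M = ‖toEuclideanCLM (𝕜 := ℝ) M‖ := by
  rw [← ContinuousLinearMap.sSup_unitClosedBall_eq_norm, sSup_image', specNorm]
  refine Equiv.iSup_congr
    (Equiv.subtypeEquiv (WithLp.equiv 2 (Fin N → ℝ)).symm fun v => ?_) fun v => ?_ <;>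
    simp [enorm_eq_norm_toLp]

theorem dotProduct_mulVec_eq_inner (M : Matrix (Fin N) (Fin N) ℝ) (v : Fin N → ℝ) :
    v ⬝ᵥ M *ᵥ v = ⟪WithLp.toLp 2 v, toEuclideanCLM (𝕜 := ℝ) M (WithLp.toLp 2 v)⟫ :=
  (inner_toEuclideanCLM M _ _).symm

end EuclideanNorms

theorem stmt_14_general {N : ℕ} (Z : Set ℝ)
    (Kmu musup KINV lam : ℝ)
    (y : Fin N → ℝ) (mu : ℝ → Fin N → ℝ) (C : ℝ → Matrix (Fin N) (Fin N) ℝ)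
    (hmuLip : ∀ x ∈ Z, ∀ x' ∈ Z, _root_.enorm (mu x - mu x') ≤ Kmu * |x - x'|)
    (hmuBdd : ∀ x ∈ Z, _root_.enorm (mu x) ≤ musup)
    (hCinvNorm : ∀ x ∈ Z, specNorm (C x)⁻¹ ≤ 1 / lam)
    (hCinvLip : ∀ x ∈ Z, ∀ x' ∈ Z, specNorm ((C x)⁻¹ - (C x')⁻¹) ≤ KINV * |x - x'|) :
    ∀ x ∈ Z, ∀ x' ∈ Z,
      |(y - mu x) ⬝ᵥ (C x)⁻¹.mulVec (y - mu x) -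
          (y - mu x') ⬝ᵥ (C x')⁻¹.mulVec (y - mu x')| ≤
        (2 * Kmu * (_root_.enorm y + musup) / lam + KINV * (_root_.enorm y + musup) ^ 2) * |x - x'| := by
  intro x hx x' hx'
  have hu : ∀ z ∈ Z, ‖WithLp.toLp 2 (y - mu z)‖ ≤ _root_.enorm y + musup := fun z hz =>
    calc ‖WithLp.toLp 2 (y - mu z)‖ ≤ ‖WithLp.toLp 2 y‖ + ‖WithLp.toLp 2 (mu z)‖ := by
          rw [WithLp.toLp_sub]; exact norm_sub_le _ _
      _ ≤ _root_.enorm y + musup := by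
          rw [← enorm_eq_norm_toLp, ← enorm_eq_norm_toLp]; gcongr; exact hmuBdd z hz
  have hδ : ‖WithLp.toLp 2 (y - mu x) - WithLp.toLp 2 (y - mu x')‖ ≤ Kmu * |x - x'| := by
    rw [← WithLp.toLp_sub, ← enorm_eq_norm_toLp, sub_sub_sub_cancel_left, abs_sub_comm]
    exact hmuLip x' hx' x hx
  have ha := hCinvNorm x hx
  have hκ := hCinvLip x hx x' hx'
  rw [specNorm_eq_norm_toEuclideanCLM] at ha
  rw [specNorm_eq_norm_toEuclideanCLM, map_sub] at hκ
  rw [dotProduct_mulVec_eq_inner, dotProduct_mulVec_eq_inner]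
  refine (abs_inner_apply_sub_inner_apply_le_of_le (hu x hx) (hu x' hx') hδ ha hκ).trans_eq ?_
  ring

/-- The Lipschitz estimate for the Gaussian exponent
`q(x) = ⟨y − μ(x), C(x)⁻¹ (y − μ(x))⟩` appearing in the likelihood ratio (the bound
defining the factor `Θ(y)` in the key lemma of the paper). -/
theorem stmt_14 {N : ℕ} (hN : 1 ≤ N) (Z : Set ℝ)
    (Kmu musup KINV lam : ℝ) (hKmu : 0 ≤ Kmu) (hmusup : 0 ≤ musup)
    (hKINV : 0 ≤ KINV) (hlam : 1 ≤ lam)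
    (y : Fin N → ℝ) (mu : ℝ → Fin N → ℝ) (C : ℝ → Matrix (Fin N) (Fin N) ℝ)
    (hmuLip : ∀ x ∈ Z, ∀ x' ∈ Z, _root_.enorm (mu x - mu x') ≤ Kmu * |x - x'|)
    (hmuBdd : ∀ x ∈ Z, _root_.enorm (mu x) ≤ musup)
    (hCinv : ∀ x ∈ Z, IsUnit (C x))
    (hCinvNorm : ∀ x ∈ Z, specNorm (C x)⁻¹ ≤ 1 / lam)
    (hCinvLip : ∀ x ∈ Z, ∀ x' ∈ Z, specNorm ((C x)⁻¹ - (C x')⁻¹) ≤ KINV * |x - x'|) :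
    ∀ x ∈ Z, ∀ x' ∈ Z,
      |(y - mu x) ⬝ᵥ (C x)⁻¹.mulVec (y - mu x) -
          (y - mu x') ⬝ᵥ (C x')⁻¹.mulVec (y - mu x')| ≤
        (2 * Kmu * (_root_.enorm y + musup) / lam + KINV * (_root_.enorm y + musup) ^ 2) * |x - x'| :=
  stmt_14_general Z Kmu musup KINV lam y mu C hmuLip hmuBdd hCinvNorm hCinvLip
end

section
/- Fix N ≥ 1, t ∈ ℕ, and λ > 1. Let A_0, …, A_t and B_0, …, B_t be real symmetric positive definite N×N matrices all of whose eigenvalues are at least λ. Then | ∏_{i=0}^{t} det(A_i)^{−1/2} − ∏_{i=0}^{t} det(B_i)^{−1/2} | ≤ (1 / (2·λ^{N(t+2)/2})) · ∑_{i=0}^{t} | det(A_i) − det(B_i) |. -/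
/-!
All eigenvalues of `A i` are at least `λ`, so `det (A i) ≥ λ ^ N = m ^ 2` with `m = λ ^ (N / 2)`.
Hence every factor `det (A i) ^ (-1/2)` lies in `[0, 1/m]`, and `x ↦ x ^ (-1/2)` is
`1 / (2 m³)`-Lipschitz on `[m², ∞)`. Telescoping a difference of two products of `t + 1` factors
in `[0, 1/m]` costs a factor `m⁻ᵗ`, which gives the bound with `m ^ (t + 3) ≥ m ^ (t + 2)`.
-/

open Finset Set MatrixOrder

theorem Matrix.pow_card_le_det_of_posSemidef_sub_smul_one {n : Type*} [Fintype n] [DecidableEq n]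
    {M : Matrix n n ℝ} {c : ℝ} (hc : 0 ≤ c) (h : (M - c • 1).PosSemidef) :
    c ^ Fintype.card n ≤ M.det := by
  have hM : M.IsHermitian := by
    simpa using h.isHermitian.add (isHermitian_one.smul (IsSelfAdjoint.all c))
  have hle : algebraMap ℝ (Matrix n n ℝ) c ≤ M := by
    rwa [Matrix.le_iff, Algebra.algebraMap_eq_smul_one]
  rw [algebraMap_le_iff_le_spectrum hM.isSelfAdjoint] at hle
  rw [hM.det_eq_prod_eigenvalues, ← Finset.card_univ, ← prod_const]
  exact prod_le_prod (fun _ _ => hc) fun i _ => by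
    simpa using hle _ (hM.eigenvalues_mem_spectrum_real i)

theorem Fin.abs_prod_sub_prod_le {R : Type*} [CommRing R] [LinearOrder R] [IsStrictOrderedRing R]
    {n : ℕ} {c : R} {f g : Fin (n + 1) → R} (hf : ∀ i, f i ∈ Icc 0 c) (hg : ∀ i, g i ∈ Icc 0 c) :
    |∏ i, f i - ∏ i, g i| ≤ c ^ n * ∑ i, |f i - g i| := by
  induction n with
  | zero => simp
  | succ n ih =>
    have hc : 0 ≤ c := (hf 0).1.trans (hf 0).2
    have hQ0 : 0 ≤ ∏ i : Fin (n + 1), g i.succ := prod_nonneg fun i _ => (hg _).1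
    have hQc : ∏ i : Fin (n + 1), g i.succ ≤ c ^ (n + 1) := by
      simpa using prod_le_prod (s := univ) (fun i _ => (hg (Fin.succ i)).1)
        fun i _ => (hg (Fin.succ i)).2
    have ih_tail := ih (fun i => hf i.succ) (fun i => hg i.succ)
    rw [Fin.prod_univ_succ f, Fin.prod_univ_succ g, Fin.sum_univ_succ]
    calc |f 0 * ∏ i : Fin (n + 1), f i.succ - g 0 * ∏ i : Fin (n + 1), g i.succ|
        = |(f 0 - g 0) * ∏ i : Fin (n + 1), g i.succ
            + f 0 * (∏ i : Fin (n + 1), f i.succ - ∏ i : Fin (n + 1), g i.succ)| := by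
          congr 1; ring
      _ ≤ |f 0 - g 0| * c ^ (n + 1) + c * (c ^ n * ∑ i : Fin (n + 1), |f i.succ - g i.succ|) := by
        refine (abs_add_le _ _).trans (add_le_add ?_ ?_) <;> rw [abs_mul]
        · rw [abs_of_nonneg hQ0]; gcongr
        · rw [abs_of_nonneg (hf 0).1]; gcongr; exact (hf 0).2
      _ = c ^ (n + 1) * (|f 0 - g 0| + ∑ i : Fin (n + 1), |f i.succ - g i.succ|) := by ring

theorem abs_inv_sub_inv_le {m u v : ℝ} (hm : 0 < m) (hu : m ≤ u) (hv : m ≤ v) :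
    |u⁻¹ - v⁻¹| ≤ |u ^ 2 - v ^ 2| / (2 * m ^ 3) := by
  have hu0 : 0 < u := hm.trans_le hu
  have hv0 : 0 < v := hm.trans_le hv
  have hden : 2 * m ^ 3 ≤ u * v * (u + v) := by
    have := mul_le_mul (mul_le_mul hu hv hm.le hu0.le) (add_le_add hu hv) (by positivity)
      (by positivity)
    linarith
  have hdiff : u⁻¹ - v⁻¹ = -(u ^ 2 - v ^ 2) / (u * v * (u + v)) := by
    field_simp
    ring
  rw [hdiff, abs_div, abs_neg, abs_of_pos (by positivity : 0 < u * v * (u + v))]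
  gcongr

theorem Real.rpow_neg_half_eq_inv_sqrt {x : ℝ} (hx : 0 ≤ x) : x ^ (-(1 : ℝ) / 2) = (√x)⁻¹ := by
  rw [Real.sqrt_eq_rpow, ← Real.rpow_neg hx]
  norm_num

theorem Real.abs_rpow_neg_half_sub_le {m x y : ℝ} (hm : 0 < m) (hx : m ^ 2 ≤ x) (hy : m ^ 2 ≤ y) :
    |x ^ (-(1 : ℝ) / 2) - y ^ (-(1 : ℝ) / 2)| ≤ |x - y| / (2 * m ^ 3) := by
  have hx0 : 0 ≤ x := (sq_nonneg m).trans hx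
  have hy0 : 0 ≤ y := (sq_nonneg m).trans hy
  rw [rpow_neg_half_eq_inv_sqrt hx0, rpow_neg_half_eq_inv_sqrt hy0]
  simpa [sq_sqrt hx0, sq_sqrt hy0] using
    abs_inv_sub_inv_le hm (le_sqrt_of_sq_le hx) (le_sqrt_of_sq_le hy)

theorem Real.rpow_neg_half_mem_Icc {m x : ℝ} (hm : 0 < m) (hx : m ^ 2 ≤ x) :
    x ^ (-(1 : ℝ) / 2) ∈ Icc 0 m⁻¹ := by
  have hx0 : 0 ≤ x := (sq_nonneg m).trans hx
  rw [rpow_neg_half_eq_inv_sqrt hx0]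
  exact ⟨by positivity, inv_anti₀ hm (le_sqrt_of_sq_le hx)⟩

theorem abs_prod_rpow_neg_half_sub_le {n : ℕ} {m : ℝ} (hm : 1 ≤ m) {x y : Fin (n + 1) → ℝ}
    (hx : ∀ i, m ^ 2 ≤ x i) (hy : ∀ i, m ^ 2 ≤ y i) :
    |∏ i, x i ^ (-(1 : ℝ) / 2) - ∏ i, y i ^ (-(1 : ℝ) / 2)| ≤
      1 / (2 * m ^ (n + 3)) * ∑ i, |x i - y i| := by
  have hm0 : 0 < m := one_pos.trans_le hm
  calc |∏ i, x i ^ (-(1 : ℝ) / 2) - ∏ i, y i ^ (-(1 : ℝ) / 2)|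
      ≤ m⁻¹ ^ n * ∑ i, |x i ^ (-(1 : ℝ) / 2) - y i ^ (-(1 : ℝ) / 2)| :=
        Fin.abs_prod_sub_prod_le (fun i => Real.rpow_neg_half_mem_Icc hm0 (hx i))
          (fun i => Real.rpow_neg_half_mem_Icc hm0 (hy i))
    _ ≤ m⁻¹ ^ n * ∑ i, |x i - y i| / (2 * m ^ 3) := by
        gcongr with i
        exact Real.abs_rpow_neg_half_sub_le hm0 (hx i) (hy i)
    _ = 1 / (2 * m ^ (n + 3)) * ∑ i, |x i - y i| := by
        rw [← sum_div, inv_pow]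
        field_simp
        ring

theorem stmt_15_general {N : ℕ} (t : ℕ) (lam : ℝ) (hlam : 1 < lam)
    (A B : Fin (t + 1) → Matrix (Fin N) (Fin N) ℝ)
    (hAeig : ∀ i, (A i - lam • (1 : Matrix (Fin N) (Fin N) ℝ)).PosSemidef)
    (hBeig : ∀ i, (B i - lam • (1 : Matrix (Fin N) (Fin N) ℝ)).PosSemidef) :
    |(∏ i, (A i).det ^ (-(1 : ℝ) / 2)) - ∏ i, (B i).det ^ (-(1 : ℝ) / 2)| ≤
      (1 / (2 * lam ^ (((N : ℝ) * (t + 2)) / 2))) * ∑ i, |(A i).det - (B i).det| := by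
  set m := lam ^ ((N : ℝ) / 2)
  have hm : 1 ≤ m := Real.one_le_rpow hlam.le (by positivity)
  have hdet : ∀ M : Matrix (Fin N) (Fin N) ℝ, (M - lam • 1).PosSemidef → m ^ 2 ≤ M.det := by
    intro M hM
    have hm2 : m ^ 2 = lam ^ N := by
      rw [← Real.rpow_natCast, ← Real.rpow_mul (by positivity), ← Real.rpow_natCast]
      norm_num
    simpa [hm2] using Matrix.pow_card_le_det_of_posSemidef_sub_smul_one (by positivity) hM
  have hexp : lam ^ (((N : ℝ) * (t + 2)) / 2) = m ^ (t + 2) := by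
    rw [← Real.rpow_natCast, ← Real.rpow_mul (by positivity)]
    push_cast
    ring_nf
  calc _ ≤ 1 / (2 * m ^ (t + 3)) * ∑ i, |(A i).det - (B i).det| :=
        abs_prod_rpow_neg_half_sub_le hm (fun i => hdet _ (hAeig i)) (fun i => hdet _ (hBeig i))
    _ ≤ _ := by
        rw [hexp]
        gcongr
        norm_num

/-- The determinant part of the likelihood-ratio difference bound in the key lemma:
for symmetric positive definite matrices with all eigenvalues at least `λ > 1`,
`|∏ det(A_i)^{−1/2} − ∏ det(B_i)^{−1/2}| ≤ (2·λ^{N(t+2)/2})⁻¹ ∑ |det A_i − det B_i|`. -/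
theorem stmt_15 {N : ℕ} (hN : 1 ≤ N) (t : ℕ) (lam : ℝ) (hlam : 1 < lam)
    (A B : Fin (t + 1) → Matrix (Fin N) (Fin N) ℝ)
    (hA : ∀ i, (A i).PosDef) (hB : ∀ i, (B i).PosDef)
    (hAeig : ∀ i, (A i - lam • (1 : Matrix (Fin N) (Fin N) ℝ)).PosSemidef)
    (hBeig : ∀ i, (B i - lam • (1 : Matrix (Fin N) (Fin N) ℝ)).PosSemidef) :
    |(∏ i, (A i).det ^ (-(1 : ℝ) / 2)) - ∏ i, (B i).det ^ (-(1 : ℝ) / 2)| ≤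
      (1 / (2 * lam ^ (((N : ℝ) * (t + 2)) / 2))) * ∑ i, |(A i).det - (B i).det| :=
  stmt_15_general t lam hlam A B hAeig hBeig
end

section
/- Let (Ω, F, Q) be a probability space, G ⊆ F a sub-σ-algebra, and δ ≥ 0. Let X, X' : Ω → ℝ satisfy |X| ≤ δ and |X'| ≤ δ almost surely, and let Λ, Λ' : Ω → ℝ satisfy Λ ≥ 0, 0 < Λ' ≤ 1 almost surely, with Λ, Λ', XΛ and X'Λ' integrable and E[Λ | G] > 0 and E[Λ' | G] > 0 almost everywhere. Then, Q-almost everywhere: | E[XΛ | G]/E[Λ | G] − E[X'Λ' | G]/E[Λ' | G] | ≤ ( 2δ·E[|Λ − Λ'| | G] + E[|X − X'| | G] ) / E[Λ' | G]. -/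
/-!
Write `a = E[XΛ|G]`, `b = E[Λ|G]`, `c = E[X'Λ'|G]`, `d = E[Λ'|G]`. Then
`a/b - c/d = (a (d - b) + (a - c) b) / (b d)`, and conditional expectation turns the pointwise
bounds `|XΛ| ≤ δΛ` and `|XΛ - X'Λ'| ≤ δ|Λ - Λ'| + |X - X'|` (from
`XΛ - X'Λ' = X (Λ - Λ') + (X - X') Λ'` and `|Λ'| ≤ 1`) into `|a| ≤ δ b`, `|b - d| ≤ E[|Λ - Λ'| | G]`
and `|a - c| ≤ δ E[|Λ - Λ'| | G] + E[|X - X'| | G]`.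
-/

open MeasureTheory Filter

theorem abs_div_sub_div_le {a b c d δ p q : ℝ} (hb : 0 < b) (hd : 0 < d) (ha : |a| ≤ δ * b)
    (hbd : |b - d| ≤ p) (hac : |a - c| ≤ δ * p + q) :
    |a / b - c / d| ≤ (2 * δ * p + q) / d := by
  have hsplit : a / b - c / d = (a * (d - b) + (a - c) * b) / (b * d) := by
    field_simp
    ring
  rw [hsplit, abs_div, abs_of_pos (mul_pos hb hd), div_le_div_iff₀ (mul_pos hb hd) hd]
  calc |a * (d - b) + (a - c) * b| * d ≤ (|a| * |b - d| + |a - c| * b) * d := by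
        grw [abs_add_le, abs_mul, abs_mul, abs_sub_comm d b, abs_of_pos hb]
    _ ≤ (δ * b * p + (δ * p + q) * b) * d := by
        gcongr
        exact (abs_nonneg a).trans ha
    _ = (2 * δ * p + q) * (b * d) := by ring

theorem abs_mul_sub_mul_le {x x' l l' δ : ℝ} (hx : |x| ≤ δ) (hl' : |l'| ≤ 1) :
    |x * l - x' * l'| ≤ δ * |l - l'| + |x - x'| :=
  calc |x * l - x' * l'| = |x * (l - l') + (x - x') * l'| := by congr 1; ring
    _ ≤ |x| * |l - l'| + |x - x'| * |l'| := by grw [abs_add_le, abs_mul, abs_mul]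
    _ ≤ δ * |l - l'| + |x - x'| * 1 := by gcongr
    _ = δ * |l - l'| + |x - x'| := by rw [mul_one]

section condExp

variable {Ω : Type*} {m m₀ : MeasurableSpace Ω} {μ : Measure Ω} {f f' g h : Ω → ℝ}

theorem condExp_const_mul (c : ℝ) (g : Ω → ℝ) :
    μ[fun ω => c * g ω | m] =ᵐ[μ] fun ω => c * μ[g | m] ω :=
  condExp_smul c g m

theorem ae_abs_condExp_le_condExp (hf : Integrable f μ) (hg : Integrable g μ)
    (hfg : ∀ᵐ ω ∂μ, |f ω| ≤ g ω) : ∀ᵐ ω ∂μ, |μ[f | m] ω| ≤ μ[g | m] ω :=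
  (abs_condExp_ae_le_condExp_abs f).trans (condExp_mono hf.abs hg hfg)

theorem ae_abs_condExp_le_const_mul (c : ℝ) (hf : Integrable f μ) (hg : Integrable g μ)
    (hfg : ∀ᵐ ω ∂μ, |f ω| ≤ c * g ω) : ∀ᵐ ω ∂μ, |μ[f | m] ω| ≤ c * μ[g | m] ω := by
  filter_upwards [ae_abs_condExp_le_condExp (m := m) hf (hg.const_mul c) hfg,
    condExp_const_mul (m := m) (μ := μ) c g] with ω hle hmul
  rwa [hmul] at hle

theorem ae_abs_condExp_sub_condExp_le (hf : Integrable f μ) (hg : Integrable g μ) :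
    ∀ᵐ ω ∂μ, |μ[f | m] ω - μ[g | m] ω| ≤ μ[fun ω => |f ω - g ω| | m] ω := by
  filter_upwards [ae_abs_condExp_le_condExp (m := m) (hf.sub hg) (hf.sub hg).abs
    (.of_forall fun _ => le_rfl), condExp_sub hf hg m] with ω hle hsub
  rwa [hsub] at hle

theorem ae_abs_condExp_sub_condExp_le_const_mul_add (c : ℝ) (hf : Integrable f μ)
    (hf' : Integrable f' μ) (hg : Integrable g μ) (hh : Integrable h μ)
    (hbound : ∀ᵐ ω ∂μ, |f ω - f' ω| ≤ c * g ω + h ω) :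
    ∀ᵐ ω ∂μ, |μ[f | m] ω - μ[f' | m] ω| ≤ c * μ[g | m] ω + μ[h | m] ω := by
  filter_upwards [ae_abs_condExp_le_condExp (m := m) (hf.sub hf') ((hg.const_mul c).add hh)
    hbound, condExp_sub hf hf' m, condExp_add (hg.const_mul c) hh m,
    condExp_const_mul (m := m) (μ := μ) c g] with ω hle hsub hadd hmul
  rw [hsub] at hle
  change _ ≤ μ[(fun ω => c * g ω) + h | m] ω at hle
  rwa [hadd, Pi.add_apply, hmul] at hle

end condExp

theorem stmt_16_general {Ω : Type*} {F : MeasurableSpace Ω} (Q : Measure Ω)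
    (G : MeasurableSpace Ω) (δ : ℝ)
    (X X' Λ Λ' : Ω → ℝ)
    (hX : ∀ᵐ ω ∂Q, |X ω| ≤ δ)
    (hΛ : ∀ᵐ ω ∂Q, 0 ≤ Λ ω) (hΛ' : ∀ᵐ ω ∂Q, 0 < Λ' ω ∧ Λ' ω ≤ 1)
    (hXint : Integrable X Q) (hX'int : Integrable X' Q)
    (hΛint : Integrable Λ Q) (hΛ'int : Integrable Λ' Q)
    (hXΛint : Integrable (fun ω => X ω * Λ ω) Q)
    (hX'Λ'int : Integrable (fun ω => X' ω * Λ' ω) Q)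
    (hpos : ∀ᵐ ω ∂Q, 0 < (Q[Λ | G]) ω) (hpos' : ∀ᵐ ω ∂Q, 0 < (Q[Λ' | G]) ω) :
    ∀ᵐ ω ∂Q,
      |(Q[fun ω' => X ω' * Λ ω' | G]) ω / (Q[Λ | G]) ω -
          (Q[fun ω' => X' ω' * Λ' ω' | G]) ω / (Q[Λ' | G]) ω| ≤
        (2 * δ * (Q[fun ω' => |Λ ω' - Λ' ω'| | G]) ω +
            (Q[fun ω' => |X ω' - X' ω'| | G]) ω) / (Q[Λ' | G]) ω := by
  have hnum : ∀ᵐ ω ∂Q, |(Q[fun ω' => X ω' * Λ ω' | G]) ω| ≤ δ * (Q[Λ | G]) ω := by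
    refine ae_abs_condExp_le_const_mul δ hXΛint hΛint ?_
    filter_upwards [hX, hΛ] with ω hXω hΛω
    rw [abs_mul, abs_of_nonneg hΛω]
    exact mul_le_mul_of_nonneg_right hXω hΛω
  have hden := ae_abs_condExp_sub_condExp_le (m := G) hΛint hΛ'int
  have hnum_sub := ae_abs_condExp_sub_condExp_le_const_mul_add (m := G) δ hXΛint hX'Λ'int
    (hΛint.sub hΛ'int).abs (hXint.sub hX'int).abs <| by
      filter_upwards [hX, hΛ'] with ω hXω hΛ'ω
      exact abs_mul_sub_mul_le hXω ((abs_of_pos hΛ'ω.1).trans_le hΛ'ω.2)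
  filter_upwards [hnum, hden, hnum_sub, hpos, hpos'] with ω h₁ h₂ h₃ hb hd
  exact abs_div_sub_div_le hb hd h₁ h₂ h₃

/-- **Abstract filter-perturbation inequality** (final step of the proof of Theorem 3):
the difference between two conditional-expectation ratios of Kallianpur–Striebel form is
controlled by the conditional L¹ distances of the likelihoods and the integrands, divided
by the conditional expectation of the approximate likelihood. -/
theorem stmt_16 {Ω : Type*} {F : MeasurableSpace Ω} (Q : Measure Ω)
    [IsProbabilityMeasure Q] (G : MeasurableSpace Ω) (hG : G ≤ F) (δ : ℝ) (hδ : 0 ≤ δ)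
    (X X' Λ Λ' : Ω → ℝ)
    (hX : ∀ᵐ ω ∂Q, |X ω| ≤ δ) (hX' : ∀ᵐ ω ∂Q, |X' ω| ≤ δ)
    (hΛ : ∀ᵐ ω ∂Q, 0 ≤ Λ ω) (hΛ' : ∀ᵐ ω ∂Q, 0 < Λ' ω ∧ Λ' ω ≤ 1)
    (hXint : Integrable X Q) (hX'int : Integrable X' Q)
    (hΛint : Integrable Λ Q) (hΛ'int : Integrable Λ' Q)
    (hXΛint : Integrable (fun ω => X ω * Λ ω) Q)
    (hX'Λ'int : Integrable (fun ω => X' ω * Λ' ω) Q)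
    (hpos : ∀ᵐ ω ∂Q, 0 < (Q[Λ | G]) ω) (hpos' : ∀ᵐ ω ∂Q, 0 < (Q[Λ' | G]) ω) :
    ∀ᵐ ω ∂Q,
      |(Q[fun ω' => X ω' * Λ ω' | G]) ω / (Q[Λ | G]) ω -
          (Q[fun ω' => X' ω' * Λ' ω' | G]) ω / (Q[Λ' | G]) ω| ≤
        (2 * δ * (Q[fun ω' => |Λ ω' - Λ' ω'| | G]) ω +
            (Q[fun ω' => |X ω' - X' ω'| | G]) ω) / (Q[Λ' | G]) ω :=
  stmt_16_general (F := F) Q G δ X X' Λ Λ' hX hΛ hΛ' hXint hX'int hΛint hΛ'int hXΛint hX'Λ'int hpos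
    hpos'
end
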